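/- Let μ_I, μ_S, r ∈ ℝ, σ_I, σ_S ∈ ℝ^d with σ_I ≠ σ_S, T > 0, δ, ε ∈ (0,1), and ξ ~ N(0, I_d). Let L = (μ_S − μ_I)T + ((‖σ_I‖² − ‖σ_S‖²)/2)T + √T (σ_S − σ_I)·ξ. If μ_S − μ_I + ‖σ_I‖² − σ_S·σ_I ≥ (z_δ + z_ε)‖σ_S − σ_I‖/√T, then P( L + (‖σ_S − σ_I‖²/2)T < z_δ‖σ_S − σ_I‖√T ) ≤ ε. -/

import Mathlib

/-!
Completing the square, `(‖σI‖² - ‖σS‖²)/2 + ‖σS - σI‖²/2 = ‖σI‖² - ⟪σS, σI⟫`, so the drift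
hypothesis turns the event into `⟪u, ξ⟫ > z_ε` for the unit vector `u = (σI - σS)/‖σI - σS‖`.
Since `ξ ↦ ⟪u, ξ⟫` is standard normal under `N(0, I_d)`, that event has probability
`P(N(0,1) > z_ε) ≤ ε`.
-/

open MeasureTheory ProbabilityTheory

/-- The standard Gaussian measure `N(0, I_d)` on `EuclideanSpace ℝ (Fin d)`. -/
noncomputable def stdGaussian (d : ℕ) : Measure (EuclideanSpace ℝ (Fin d)) :=
  (Measure.pi fun _ : Fin d => gaussianReal 0 1).map
    (EuclideanSpace.equiv (Fin d) ℝ).symm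

/-- The standard normal distribution function `F`. -/
noncomputable def stdNormalCDF (x : ℝ) : ℝ := ((gaussianReal 0 1) (Set.Iic x)).toReal

open scoped RealInnerProductSpace

theorem stdGaussian_eq_stdGaussian_euclideanSpace (d : ℕ) :
    stdGaussian d = ProbabilityTheory.stdGaussian (EuclideanSpace ℝ (Fin d)) :=
  map_pi_eq_stdGaussian

namespace ProbabilityTheory

variable {E : Type*} [NormedAddCommGroup E] [InnerProductSpace ℝ E] [FiniteDimensional ℝ E]
  [MeasurableSpace E] [BorelSpace E]

theorem stdGaussian_map_inner_of_norm_eq_one {u : E} (hu : ‖u‖ = 1) :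
    (stdGaussian E).map (fun ξ => ⟪u, ξ⟫) = gaussianReal 0 1 := by
  have h := IsGaussian.map_eq_gaussianReal (μ := stdGaussian E) (innerSL ℝ u)
  rw [integral_strongDual_stdGaussian, variance_dual_stdGaussian, innerSL_apply_norm, hu] at h
  simpa using h

theorem stdGaussian_inner_gt_of_norm_eq_one {u : E} (hu : ‖u‖ = 1) (z : ℝ) :
    stdGaussian E {ξ | z < ⟪u, ξ⟫} = gaussianReal 0 1 (Set.Ioi z) := by
  rw [← stdGaussian_map_inner_of_norm_eq_one hu,
    Measure.map_apply (by fun_prop) measurableSet_Ioi]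
  rfl

end ProbabilityTheory

theorem lt_inner_normalized_sub_of_lt {E : Type*} [NormedAddCommGroup E] [InnerProductSpace ℝ E]
    {μI μS T zδ zε : ℝ} {σI σS ξ : E} (hT : 0 < T) (hne : σI ≠ σS)
    (h : μS - μI + ‖σI‖ ^ 2 - ⟪σS, σI⟫ ≥ (zδ + zε) * ‖σS - σI‖ / Real.sqrt T)
    (hξ : (μS - μI) * T + ((‖σI‖ ^ 2 - ‖σS‖ ^ 2) / 2) * T + Real.sqrt T * ⟪σS - σI, ξ⟫
        + (‖σS - σI‖ ^ 2 / 2) * T < zδ * ‖σS - σI‖ * Real.sqrt T) :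
    zε < ⟪‖σI - σS‖⁻¹ • (σI - σS), ξ⟫ := by
  set c := ‖σS - σI‖ with hc_def
  set s := Real.sqrt T
  have hc : 0 < c := norm_pos_iff.mpr (sub_ne_zero.mpr hne.symm)
  have hs : 0 < s := Real.sqrt_pos.mpr hT
  have hsq : T = s ^ 2 := (Real.sq_sqrt hT.le).symm
  have hdrift : (zδ + zε) * c ≤ (μS - μI + ‖σI‖ ^ 2 - ⟪σS, σI⟫) * s := (div_le_iff₀ hs).mp h
  have hsquare : (‖σI‖ ^ 2 - ‖σS‖ ^ 2) / 2 + c ^ 2 / 2 = ‖σI‖ ^ 2 - ⟪σS, σI⟫ := by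
    rw [hc_def, norm_sub_sq_real]; ring
  have hξ' : s * ((μS - μI + ‖σI‖ ^ 2 - ⟪σS, σI⟫) * s + ⟪σS - σI, ξ⟫) < s * (zδ * c) := by
    rw [hsq] at hξ; linear_combination hξ - s ^ 2 * hsquare
  have hinner : ⟪σS - σI, ξ⟫ < -(zε * c) := by
    linarith [lt_of_mul_lt_mul_left hξ' hs.le]
  rw [norm_sub_rev, real_inner_smul_left, ← neg_sub σS σI, inner_neg_left, ← hc_def,
    ← div_eq_inv_mul, lt_div_iff₀ hc]
  linarith

theorem stmt8_general {d : ℕ} (μI μS T ε : ℝ) (hT : 0 < T)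
    (σI σS : EuclideanSpace ℝ (Fin d)) (hne : σI ≠ σS)
    (zδ zε : ℝ)
    (hz2 : ((gaussianReal 0 1) (Set.Ici zε)).toReal = ε)
    (h : μS - μI + ‖σI‖ ^ 2 - (inner ℝ σS σI : ℝ)
        ≥ (zδ + zε) * ‖σS - σI‖ / Real.sqrt T) :
    ((stdGaussian d) {ξ |
        ((μS - μI) * T + ((‖σI‖ ^ 2 - ‖σS‖ ^ 2) / 2) * T
            + Real.sqrt T * (inner ℝ (σS - σI) ξ : ℝ))
          + (‖σS - σI‖ ^ 2 / 2) * T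
        < zδ * ‖σS - σI‖ * Real.sqrt T}).toReal ≤ ε := by
  have hu : ‖‖σI - σS‖⁻¹ • (σI - σS)‖ = 1 := norm_smul_inv_norm (sub_ne_zero.mpr hne)
  rw [← hz2, stdGaussian_eq_stdGaussian_euclideanSpace]
  calc _ ≤ (ProbabilityTheory.stdGaussian _ {ξ | zε < ⟪‖σI - σS‖⁻¹ • (σI - σS), ξ⟫}).toReal :=
        measureReal_mono fun ξ hξ => lt_inner_normalized_sub_of_lt hT hne h hξ
    _ = (gaussianReal 0 1 (Set.Ioi zε)).toReal := by
        rw [stdGaussian_inner_gt_of_norm_eq_one hu]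
    _ ≤ (gaussianReal 0 1 (Set.Ici zε)).toReal := measureReal_mono Set.Ioi_subset_Ici_self

theorem stmt8 {d : ℕ} (μI μS r T δ ε : ℝ) (hT : 0 < T)
    (hδ : δ ∈ Set.Ioo (0 : ℝ) 1) (hε : ε ∈ Set.Ioo (0 : ℝ) 1)
    (σI σS : EuclideanSpace ℝ (Fin d)) (hne : σI ≠ σS)
    (zδ zε : ℝ)
    (hz1 : ((gaussianReal 0 1) (Set.Ici zδ)).toReal = δ)
    (hz2 : ((gaussianReal 0 1) (Set.Ici zε)).toReal = ε)
    (h : μS - μI + ‖σI‖ ^ 2 - (inner ℝ σS σI : ℝ)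
        ≥ (zδ + zε) * ‖σS - σI‖ / Real.sqrt T) :
    ((stdGaussian d) {ξ |
        ((μS - μI) * T + ((‖σI‖ ^ 2 - ‖σS‖ ^ 2) / 2) * T
            + Real.sqrt T * (inner ℝ (σS - σI) ξ : ℝ))
          + (‖σS - σI‖ ^ 2 / 2) * T
        < zδ * ‖σS - σI‖ * Real.sqrt T}).toReal ≤ ε :=
  stmt8_general μI μS T ε hT σI σS hne zδ zε hz2 h
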